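/- Let K be a finite nonempty index set, let α_𝐤 > 0 for 𝐤 ∈ K, and define β_𝐤 = α_𝐤 / ∑_{𝐥 ∈ K} α_𝐥. Suppose α_𝐤(h) = C_𝐤 · g(h) · (1 + e_𝐤(h)) with g(h) > 0, C_𝐤 > 0, ∑_{𝐤 ∈ K} C_𝐤 = 1, and |e_𝐤(h)| ≤ E h^s for all 𝐤 ∈ K. Then |β_𝐤(h) − C_𝐤| ≤ 2 E h^s / (1 − E h^s) for h small enough; in particular β_𝐤(h) = C_𝐤 + O(h^s) as h → 0. -/

import Mathlib

open scoped BigOperators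

/-- WENO consistency: if `α_k(h) = C_k g(h) (1 + e_k(h))` with `|e_k(h)| ≤ E h^s`,
then the normalized weights are within `2 E h^s / (1 - E h^s)` of the optimal
weights `C_k` for `h` small; in particular `β_k = C_k + O(h^s)`. -/
theorem stmt_17 (K : Type*) [Fintype K] [Nonempty K]
    (C : K → ℝ) (hC : ∀ k, 0 < C k) (hCsum : ∑ k, C k = 1)
    (g : ℝ → ℝ) (e : K → ℝ → ℝ) (α : K → ℝ → ℝ)
    (Ebd s h₁ : ℝ) (hE : 0 ≤ Ebd) (hs : 0 < s) (hh₁ : 0 < h₁)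
    (hg : ∀ h, 0 < h → h ≤ h₁ → 0 < g h)
    (hα : ∀ k h, 0 < h → h ≤ h₁ → α k h = C k * g h * (1 + e k h))
    (he : ∀ k h, 0 < h → h ≤ h₁ → |e k h| ≤ Ebd * h ^ s) :
    ∃ h₀ > 0, ∀ h, 0 < h → h ≤ h₀ →
      Ebd * h ^ s < 1 ∧
      ∀ k, |α k h / (∑ l, α l h) - C k| ≤ 2 * Ebd * h ^ s / (1 - Ebd * h ^ s) := by
  have key : ∀ h, 0 < h → h ≤ h₁ → Ebd * h ^ s < 1 →
      ∀ k, |α k h / (∑ l, α l h) - C k| ≤ 2 * Ebd * h ^ s / (1 - Ebd * h ^ s) := by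
    intro h hh hle hδlt k
    set δ := Ebd * h ^ s with hδdef
    have hδ0 : 0 ≤ δ := mul_nonneg hE (Real.rpow_nonneg hh.le s)
    have hgpos := hg h hh hle
    set T := ∑ l, C l * e l h with hT
    have hTbd : |T| ≤ δ := by
      calc |T| ≤ ∑ l, |C l * e l h| := Finset.abs_sum_le_sum_abs _ _
        _ ≤ ∑ l, C l * δ := by
            apply Finset.sum_le_sum; intro l _
            rw [abs_mul, abs_of_pos (hC l)]
            exact mul_le_mul_of_nonneg_left (he l h hh hle) (hC l).le
        _ = δ := by rw [← Finset.sum_mul, hCsum, one_mul]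
    have hTlo := (abs_le.mp hTbd).1
    have h1T : 0 < 1 + T := by linarith
    have hSum : (∑ l, α l h) = g h * (1 + T) := by
      have h1 : ∀ l ∈ Finset.univ, α l h = g h * C l + g h * (C l * e l h) := by
        intro l _; rw [hα l h hh hle]; ring
      rw [Finset.sum_congr rfl h1, Finset.sum_add_distrib, ← Finset.mul_sum,
        ← Finset.mul_sum, hCsum, ← hT]
      ring
    have hβ : α k h / (∑ l, α l h) - C k = C k * (e k h - T) / (1 + T) := by
      rw [hSum, hα k h hh hle]
      field_simp
      ring
    have hCk1 : C k ≤ 1 := by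
      rw [← hCsum]
      exact Finset.single_le_sum (fun l _ => (hC l).le) (Finset.mem_univ k)
    have hnum : |C k * (e k h - T)| ≤ 2 * δ := by
      rw [abs_mul, abs_of_pos (hC k)]
      have habs : |e k h - T| ≤ 2 * δ := by
        calc |e k h - T| ≤ |e k h| + |T| := abs_sub _ _
          _ ≤ δ + δ := add_le_add (he k h hh hle) hTbd
          _ = 2 * δ := by ring
      calc C k * |e k h - T| ≤ 1 * (2 * δ) :=
            mul_le_mul hCk1 habs (abs_nonneg _) zero_le_one
        _ = 2 * δ := one_mul _
    rw [hβ, abs_div, abs_of_pos h1T]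
    calc |C k * (e k h - T)| / (1 + T) ≤ (2 * δ) / (1 - δ) :=
          div_le_div₀ (by positivity) hnum (by linarith) (by linarith)
      _ = 2 * Ebd * h ^ s / (1 - Ebd * h ^ s) := by rw [hδdef]; ring_nf
  rcases eq_or_lt_of_le hE with hE0 | hEpos
  · refine ⟨h₁, hh₁, fun h hh hle => ⟨?_, key h hh hle ?_⟩⟩ <;>
      simp [← hE0]
  · set x := (1 / (2 * Ebd)) ^ (1 / s) with hxdef
    have hx : 0 < x := Real.rpow_pos_of_pos (by positivity) _
    refine ⟨min h₁ x, lt_min hh₁ hx, fun h hh hle => ?_⟩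
    have hle1 : h ≤ h₁ := hle.trans (min_le_left _ _)
    have hlex : h ≤ x := hle.trans (min_le_right _ _)
    have hxs : x ^ s = 1 / (2 * Ebd) := by
      rw [hxdef, ← Real.rpow_mul (by positivity), one_div_mul_cancel hs.ne',
        Real.rpow_one]
    have hhs : h ^ s ≤ x ^ s := Real.rpow_le_rpow hh.le hlex hs.le
    have hhalf : Ebd * h ^ s ≤ 1 / 2 := by
      calc Ebd * h ^ s ≤ Ebd * x ^ s := mul_le_mul_of_nonneg_left hhs hE
        _ = 1 / 2 := by rw [hxs]; field_simp
    have hlt : Ebd * h ^ s < 1 := lt_of_le_of_lt hhalf (by norm_num)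
    exact ⟨hlt, key h hh hle1 hlt⟩
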